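/- arXiv:2305.17399 — 4 statements merged into one kernel-verified Lean document; each statement's English description precedes it below -/
import Mathlib

section
/- Let (G,·,⋆) be a multiplicative Lie algebra and H an ideal of G. Then the subgroup (G⋆H)[G,H] generated by all elements g⋆h (g ∈ G, h ∈ H) together with all commutators [g,h] (g ∈ G, h ∈ H) is an ideal of G. -/
/-- A multiplicative Lie algebra (Ellis): a group `G` with a second binary
operation `⋆` satisfying the five identities. `ˣy` denotes `x*y*x⁻¹`. -/
class MulLie (G : Type*) [Group G] where
  star : G → G → G
  star_self : ∀ x : G, star x x = 1
  star_mul_right : ∀ x y z : G, star x (y * z) = star x y * (y * star x z * y⁻¹)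
  star_mul_left : ∀ x y z : G, star (x * y) z = (x * star y z * x⁻¹) * star x z
  jacobi : ∀ x y z : G,
    star (star x y) (y * z * y⁻¹) * star (star y z) (z * x * z⁻¹) *
      star (star z x) (x * y * x⁻¹) = 1
  conj_star : ∀ x y z : G, z * star x y * z⁻¹ = star (z * x * z⁻¹) (z * y * z⁻¹)

open MulLie
open scoped commutatorElement

/-- An ideal of a multiplicative Lie algebra: a normal subgroup closed under
`g ⋆ h` for all `g ∈ G`, `h ∈ H`. -/
def IsMulLieIdeal {G : Type*} [Group G] [MulLie G] (H : Subgroup G) : Prop :=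
  H.Normal ∧ ∀ g h : G, h ∈ H → star g h ∈ H

/-!
Every generator `g ⋆ h` or `⁅g, h⁆` lies in `H`, so `⋆`-multiplying a generator from the left
gives a generator again, and conjugating a generator gives a generator again because
conjugation is an automorphism of both `·` and `⋆`. The subgroup generated is therefore
normal, and the right expansion rule `x ⋆ (y z) = (x ⋆ y) · ʸ(x ⋆ z)` propagates closure under
`g ⋆ -` from the generators to the whole normal subgroup.
-/

namespace Subgroup

variable {G : Type*} [Group G]

theorem normal_closure_of_conj_mem {s : Set G}
    (hs : ∀ (g : G) ⦃x : G⦄, x ∈ s → g * x * g⁻¹ ∈ s) : (closure s).Normal :=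
  normalizer_eq_top_iff.mp <| eq_top_iff.mpr <|
    le_normalizer_closure_iff.mpr fun g _ _ hx => subset_closure (hs g hx)

end Subgroup

namespace MulLie

variable {G : Type*} [Group G] [MulLie G]

theorem star_one (x : G) : star x 1 = 1 := by
  have h := star_mul_right x 1 1
  simp only [one_mul, inv_one, mul_one] at h
  exact left_eq_mul.mp h

theorem star_inv (x y : G) : star x y⁻¹ = y⁻¹ * (star x y)⁻¹ * y := by
  have h := star_mul_right x y y⁻¹
  rw [mul_inv_cancel, star_one] at h
  have hconj : y * star x y⁻¹ * y⁻¹ = (star x y)⁻¹ := eq_inv_of_mul_eq_one_right h.symm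
  rw [← hconj]
  group

theorem star_mem_of_mem_closure {K : Subgroup G} [K.Normal] {s : Set G} {g : G}
    (hs : ∀ x ∈ s, star g x ∈ K) {x : G} (hx : x ∈ Subgroup.closure s) : star g x ∈ K := by
  induction hx using Subgroup.closure_induction with
  | mem x hx => exact hs x hx
  | one => rw [star_one]; exact K.one_mem
  | mul x y _ _ hx hy =>
    rw [star_mul_right]
    exact K.mul_mem hx (Subgroup.Normal.conj_mem ‹_› _ hy x)
  | inv x _ hx =>
    rw [star_inv]
    simpa using Subgroup.Normal.conj_mem ‹_› _ (K.inv_mem hx) x⁻¹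

theorem isMulLieIdeal_closure {s : Set G}
    (hconj : ∀ (g : G) ⦃x : G⦄, x ∈ s → g * x * g⁻¹ ∈ s)
    (hstar : ∀ (g : G) ⦃x : G⦄, x ∈ s → star g x ∈ s) :
    IsMulLieIdeal (Subgroup.closure s) :=
  have := Subgroup.normal_closure_of_conj_mem hconj
  ⟨this, fun g _ hx =>
    star_mem_of_mem_closure (fun _ hx => Subgroup.subset_closure (hstar g hx)) hx⟩

end MulLie

section MixedCommutator

variable {G : Type*} [Group G] [MulLie G]

def mixedCommutatorGenerators (H : Subgroup G) : Set G :=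
  {z : G | ∃ g h : G, h ∈ H ∧ (z = star g h ∨ z = ⁅g, h⁆)}

theorem mixedCommutatorGenerators_subset {H : Subgroup G} (hH : IsMulLieIdeal H) :
    mixedCommutatorGenerators H ⊆ H := by
  rintro _ ⟨g, h, hh, rfl | rfl⟩
  · exact hH.2 g h hh
  · exact H.mul_mem (hH.1.conj_mem h hh g) (H.inv_mem hh)

theorem conj_mem_mixedCommutatorGenerators {H : Subgroup G} (hH : H.Normal) (g : G) {z : G}
    (hz : z ∈ mixedCommutatorGenerators H) : g * z * g⁻¹ ∈ mixedCommutatorGenerators H := by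
  obtain ⟨a, h, hh, rfl | rfl⟩ := hz
  · exact ⟨g * a * g⁻¹, g * h * g⁻¹, hH.conj_mem h hh g, .inl (conj_star a h g)⟩
  · exact ⟨g * a * g⁻¹, g * h * g⁻¹, hH.conj_mem h hh g, .inr (conjugate_commutatorElement a h g)⟩

theorem star_mem_mixedCommutatorGenerators {H : Subgroup G} (hH : IsMulLieIdeal H) (g : G)
    {z : G} (hz : z ∈ mixedCommutatorGenerators H) : star g z ∈ mixedCommutatorGenerators H :=
  ⟨g, z, mixedCommutatorGenerators_subset hH hz, .inl rfl⟩

end MixedCommutator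

/-- If `H` is an ideal of `G`, then the subgroup `(G ⋆ H)[G, H]` generated by all
`g ⋆ h` and all commutators `[g, h]` with `g ∈ G`, `h ∈ H` is an ideal of `G`. -/
theorem mixed_commutator_isIdeal {G : Type*} [Group G] [MulLie G]
    (H : Subgroup G) (hH : IsMulLieIdeal H) :
    IsMulLieIdeal (Subgroup.closure
      {z : G | ∃ g h : G, h ∈ H ∧ (z = star g h ∨ z = ⁅g, h⁆)}) :=
  isMulLieIdeal_closure (conj_mem_mixedCommutatorGenerators hH.1)
    (star_mem_mixedCommutatorGenerators hH)
end

section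
/- A nontrivial M𝒵-nilpotent multiplicative Lie algebra G has nontrivial 𝒵(G) = LZ(G) ∩ Z(G). -/
open MulLie
open scoped commutatorElement

/-- The lower central series `M₀(G) = G`, `M_{n+1}(G) = (G ⋆ Mₙ(G))[G, Mₙ(G)]`. -/
def Mser (G : Type*) [Group G] [MulLie G] : ℕ → Subgroup G
  | 0 => ⊤
  | n + 1 => Subgroup.closure
      {z : G | ∃ g m : G, m ∈ Mser G n ∧ (z = star g m ∨ z = ⁅g, m⁆)}

/-!
If `M_{k+1}(G) = 1` then every element `x` of `M_k(G)` satisfies `g ⋆ x = 1` and `[g, x] = 1`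
for all `g`, so `x` lies in `LZ(G) ∩ Z(G)` (using `x ⋆ g = (g ⋆ x)⁻¹`). Nilpotency and
`M_0(G) = G ≠ 1` provide a `k` with `M_k(G) ≠ 1 = M_{k+1}(G)`.
-/

namespace MulLie

variable {G : Type*} [Group G] [MulLie G]

lemma star_skew (x y : G) : star y x = (star x y)⁻¹ := by
  have h := star_self (x * y)
  rw [star_mul_left, star_mul_right, star_mul_right, star_self, star_self] at h
  have hconj : x * (star y x * star x y) * x⁻¹ = 1 := by rw [← h]; group
  exact eq_inv_of_mul_eq_one_left (conj_eq_one_iff.mp hconj)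

lemma star_mem_Mser_succ (g : G) {n : ℕ} {m : G} (hm : m ∈ Mser G n) :
    star g m ∈ Mser G (n + 1) :=
  Subgroup.subset_closure ⟨g, m, hm, Or.inl rfl⟩

lemma commutatorElement_mem_Mser_succ (g : G) {n : ℕ} {m : G} (hm : m ∈ Mser G n) :
    ⁅g, m⁆ ∈ Mser G (n + 1) :=
  Subgroup.subset_closure ⟨g, m, hm, Or.inr rfl⟩

lemma star_left_eq_one_of_mem_Mser {n : ℕ} (hn : Mser G (n + 1) = ⊥) {x : G}
    (hx : x ∈ Mser G n) (y : G) : star x y = 1 := by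
  have hyx : star y x = 1 := by
    simpa [hn] using star_mem_Mser_succ y hx
  rw [star_skew y x, hyx, inv_one]

lemma mem_center_of_mem_Mser {n : ℕ} (hn : Mser G (n + 1) = ⊥) {x : G}
    (hx : x ∈ Mser G n) : x ∈ Subgroup.center G :=
  Subgroup.mem_center_iff.mpr fun g =>
    commutatorElement_eq_one_iff_mul_comm.mp <| by
      simpa [hn] using commutatorElement_mem_Mser_succ g hx

end MulLie

/-- A nontrivial `M𝒵`-nilpotent multiplicative Lie algebra `G` has nontrivial
`𝒵(G) = LZ(G) ∩ Z(G)`. -/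
theorem MZnilpotent_center_nontrivial
    (G : Type*) [Group G] [MulLie G] [Nontrivial G]
    (hnil : ∃ n : ℕ, Mser G n = ⊥) :
    ∃ x : G, x ≠ 1 ∧ (∀ y : G, star x y = 1) ∧ x ∈ Subgroup.center G := by
  have hzero : Mser G 0 ≠ ⊥ := by
    rw [Mser]
    exact top_ne_bot
  obtain ⟨k, hk, hsucc⟩ := Nat.exists_not_and_succ_of_not_zero_of_exists hzero hnil
  obtain ⟨x, hx, hx1⟩ := (Mser G k).bot_or_exists_ne_one.resolve_left hk
  exact ⟨x, hx1, star_left_eq_one_of_mem_Mser hsucc hx, mem_center_of_mem_Mser hsucc hx⟩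
end

section
/- Define 𝒵*(G) as the intersection of φ(𝒵(E)) over all central extensions 1 → ker φ → E → G → 1 of the multiplicative Lie algebra G. Then G is Lie capable if and only if 𝒵*(G) = {1}. -/
open MulLie

/-- `𝒵(G) = LZ(G) ∩ Z(G)`: the elements that are in the Lie center and in the
group center. -/
def zSet (G : Type u) [Group G] [MulLie G] : Set G :=
  {x : G | (∀ y : G, star x y = 1) ∧ ∀ y : G, x * y = y * x}

/-- A central extension `1 → ker f → E → G → 1` of the multiplicative Lie
algebra `G`: a surjective multiplicative Lie algebra homomorphism `f : E → G`
whose kernel is contained in `Z(E) ∩ LZ(E)`. -/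
structure CentralExtOf (G : Type u) [Group G] [MulLie G] : Type (u + 1) where
  E : Type u
  [grp : Group E]
  [lie : MulLie E]
  f : E →* G
  surj : Function.Surjective f
  map_star : ∀ x y : E, f (MulLie.star x y) = star (f x) (f y)
  central : ∀ x : E, f x = 1 → x ∈ zSet E

attribute [instance] CentralExtOf.grp CentralExtOf.lie

/-- A multiplicative Lie algebra `G` is Lie capable if `G ≅ E/𝒵(E)` for some
multiplicative Lie algebra `E`, i.e. there is a surjective multiplicative Lie
algebra homomorphism `E → G` whose kernel is exactly `𝒵(E)`. -/
def LieCapable (G : Type u) [Group G] [MulLie G] : Prop :=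
  ∃ C : CentralExtOf G, ∀ x : C.E, C.f x = 1 ↔ x ∈ zSet C.E


/-- `𝒵*(G)`: the intersection of `φ(𝒵(E))` over all central extensions
`1 → ker φ → E → G → 1` of `G`. -/
def zStar (G : Type u) [Group G] [MulLie G] : Set G :=
  {g : G | ∀ C : CentralExtOf G, g ∈ C.f '' zSet C.E}

/- In the fibered product over `G` of a family of central extensions every element of a factor
lifts to the product, so an element of `𝒵` of the product has all its components in `𝒵` of the
factors. Choosing for each `g ∉ 𝒵*(G)` an extension with `g ∉ φ(𝒵(E))` (a family indexed by a
subtype of `G`, so the product stays in the universe of `G`), the fibered product is a single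
central extension with `φ(𝒵(E)) ⊆ 𝒵*(G)`. Conversely, `φ(𝒵(E)) = {1}` says exactly that
`ker φ = 𝒵(E)`, i.e. that `E` exhibits `G` as Lie capable. -/

theorem MulLie.one_star {G : Type*} [Group G] [MulLie G] (y : G) : star (1 : G) y = 1 := by
  simpa using star_mul_left (1 : G) 1 y

theorem one_mem_zSet (G : Type u) [Group G] [MulLie G] : (1 : G) ∈ zSet G :=
  ⟨MulLie.one_star, fun y => by rw [one_mul, mul_one]⟩

instance MulLie.prod {A B : Type*} [Group A] [Group B] [MulLie A] [MulLie B] :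
    MulLie (A × B) where
  star p q := (star p.1 q.1, star p.2 q.2)
  star_self _ := Prod.ext (star_self _) (star_self _)
  star_mul_right _ _ _ := Prod.ext (star_mul_right ..) (star_mul_right ..)
  star_mul_left _ _ _ := Prod.ext (star_mul_left ..) (star_mul_left ..)
  jacobi _ _ _ := Prod.ext (jacobi ..) (jacobi ..)
  conj_star _ _ _ := Prod.ext (conj_star ..) (conj_star ..)

instance MulLie.pi {ι : Type*} {A : ι → Type*} [∀ i, Group (A i)] [∀ i, MulLie (A i)] :
    MulLie (∀ i, A i) where
  star x y i := star (x i) (y i)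
  star_self _ := funext fun _ => star_self _
  star_mul_right _ _ _ := funext fun _ => star_mul_right ..
  star_mul_left _ _ _ := funext fun _ => star_mul_left ..
  jacobi _ _ _ := funext fun _ => jacobi ..
  conj_star _ _ _ := funext fun _ => conj_star ..

abbrev Subgroup.mulLie {A : Type*} [Group A] [MulLie A] (H : Subgroup A)
    (star_mem : ∀ x y : A, x ∈ H → y ∈ H → star x y ∈ H) : MulLie H where
  star x y := ⟨star (x : A) y, star_mem _ _ x.2 y.2⟩
  star_self x := Subtype.ext (star_self (x : A))
  star_mul_right x y z := Subtype.ext (star_mul_right (x : A) y z)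
  star_mul_left x y z := Subtype.ext (star_mul_left (x : A) y z)
  jacobi x y z := Subtype.ext (jacobi (x : A) y z)
  conj_star x y z := Subtype.ext (conj_star (x : A) y z)

theorem mem_zSet_prod {A B : Type u} [Group A] [Group B] [MulLie A] [MulLie B] {p : A × B}
    (h₁ : p.1 ∈ zSet A) (h₂ : p.2 ∈ zSet B) : p ∈ zSet (A × B) :=
  ⟨fun q => Prod.ext (h₁.1 q.1) (h₂.1 q.2), fun q => Prod.ext (h₁.2 q.1) (h₂.2 q.2)⟩

theorem mem_zSet_pi {ι : Type u} {A : ι → Type u} [∀ i, Group (A i)] [∀ i, MulLie (A i)]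
    {x : ∀ i, A i} (h : ∀ i, x i ∈ zSet (A i)) : x ∈ zSet (∀ i, A i) :=
  ⟨fun y => funext fun i => (h i).1 (y i), fun y => funext fun i => (h i).2 (y i)⟩

theorem Subgroup.mem_zSet_of_coe_mem {A : Type u} [Group A] [MulLie A] {H : Subgroup A}
    {star_mem : ∀ x y : A, x ∈ H → y ∈ H → star x y ∈ H} {x : H} (hx : (x : A) ∈ zSet A) :
    @zSet H _ (H.mulLie star_mem) x :=
  ⟨fun y => Subtype.ext (hx.1 y), fun y => Subtype.ext (hx.2 y)⟩

namespace CentralExtOf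

variable {G : Type u} [Group G] [MulLie G] {ι : Type u} (C : ι → CentralExtOf G)

/-- The fibered product over `G`; the `G`-coordinate makes it an extension of `G` even for an
empty family. -/
def fiberProdSubgroup : Subgroup (G × ∀ i, (C i).E) where
  carrier := {q | ∀ i, (C i).f (q.2 i) = q.1}
  one_mem' i := map_one _
  mul_mem' {a b} ha hb i := by simp only [Prod.snd_mul, Pi.mul_apply, map_mul, ha i, hb i,
    Prod.fst_mul]
  inv_mem' {a} ha i := by simp only [Prod.snd_inv, Pi.inv_apply, map_inv, ha i, Prod.fst_inv]

theorem star_mem_fiberProdSubgroup (a b : G × ∀ i, (C i).E) (ha : a ∈ fiberProdSubgroup C)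
    (hb : b ∈ fiberProdSubgroup C) : star a b ∈ fiberProdSubgroup C := fun i =>
  ((C i).map_star _ _).trans (by rw [ha i, hb i]; rfl)

instance : MulLie (fiberProdSubgroup C) :=
  (fiberProdSubgroup C).mulLie (star_mem_fiberProdSubgroup C)

theorem mem_zSet_of_mem_fiberProdSubgroup_of_fst_eq_one {q : G × ∀ i, (C i).E}
    (hq : q ∈ fiberProdSubgroup C) (h : q.1 = 1) : q ∈ zSet (G × ∀ i, (C i).E) :=
  mem_zSet_prod (h ▸ one_mem_zSet G) (mem_zSet_pi fun i => (C i).central _ ((hq i).trans h))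

noncomputable def fiberProd : CentralExtOf G where
  E := fiberProdSubgroup C
  f := (MonoidHom.fst _ _).comp (fiberProdSubgroup C).subtype
  surj g := ⟨⟨(g, fun i => Function.surjInv (C i).surj g),
    fun i => Function.surjInv_eq (C i).surj g⟩, rfl⟩
  map_star _ _ := rfl
  central x hx :=
    Subgroup.mem_zSet_of_coe_mem (star_mem := star_mem_fiberProdSubgroup C)
      (mem_zSet_of_mem_fiberProdSubgroup_of_fst_eq_one C x.2 hx)

theorem exists_fiberProdSubgroup_snd_eq (i : ι) (y : (C i).E) :
    ∃ z : fiberProdSubgroup C, (z : G × ∀ i, (C i).E).2 i = y := by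
  classical
  let g := (C i).f y
  refine ⟨⟨(g, Function.update (fun j => Function.surjInv (C j).surj g) i y), fun j => ?_⟩,
    Function.update_self i y (fun j => Function.surjInv (C j).surj g)⟩
  by_cases hj : j = i
  · subst hj
    simp only [Function.update_self, g]
  · simp only [Function.update_of_ne hj, Function.surjInv_eq (C j).surj g]

theorem snd_mem_zSet_of_mem_zSet {x : fiberProdSubgroup C} (hx : x ∈ zSet (fiberProdSubgroup C))
    (i : ι) : (x : G × ∀ i, (C i).E).2 i ∈ zSet (C i).E := by
  let proj (t : fiberProdSubgroup C) : (C i).E := (t : G × ∀ i, (C i).E).2 i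
  constructor <;> intro y <;> obtain ⟨z, rfl⟩ := exists_fiberProdSubgroup_snd_eq C i y
  · exact congrArg proj (hx.1 z)
  · exact congrArg proj (hx.2 z)

theorem image_zSet_fiberProd_subset :
    (fiberProd C).f '' zSet (fiberProd C).E ⊆ ⋂ i, (C i).f '' zSet (C i).E := by
  rintro _ ⟨x, hx, rfl⟩
  exact Set.mem_iInter.2 fun i => ⟨_, snd_mem_zSet_of_mem_zSet C (x := x) hx i, x.2 i⟩

end CentralExtOf

section zStar

variable {G : Type u} [Group G] [MulLie G]

theorem mem_zStar_iff {g : G} : g ∈ zStar G ↔ ∀ C : CentralExtOf G, g ∈ C.f '' zSet C.E :=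
  Iff.rfl

theorem one_mem_zStar : (1 : G) ∈ zStar G :=
  mem_zStar_iff.2 fun C => ⟨1, one_mem_zSet C.E, map_one C.f⟩

theorem exists_image_zSet_subset_zStar : ∃ C : CentralExtOf G, C.f '' zSet C.E ⊆ zStar G := by
  have h (g : {g // g ∉ zStar G}) : ∃ C : CentralExtOf G, g.1 ∉ C.f '' zSet C.E := by
    simpa [mem_zStar_iff] using g.2
  choose C hC using h
  refine ⟨CentralExtOf.fiberProd C, fun g hg => ?_⟩
  by_contra hgz
  exact hC ⟨g, hgz⟩ (Set.mem_iInter.1 (CentralExtOf.image_zSet_fiberProd_subset C hg) _)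

theorem lieCapable_iff_exists_image_zSet_subset_one :
    LieCapable G ↔ ∃ C : CentralExtOf G, C.f '' zSet C.E ⊆ {1} := by
  refine exists_congr fun C => ⟨?_, fun h x => ⟨C.central x, fun hx => h ⟨x, hx, rfl⟩⟩⟩
  rintro hC _ ⟨x, hx, rfl⟩
  exact (hC x).2 hx

end zStar

/-- `G` is Lie capable if and only if `𝒵*(G) = {1}`. -/
theorem lieCapable_iff_zStar_eq_one (G : Type u) [Group G] [MulLie G] :
    LieCapable G ↔ zStar G = {1} := by
  rw [lieCapable_iff_exists_image_zSet_subset_one]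
  constructor
  · rintro ⟨C, hC⟩
    exact Set.eq_singleton_iff_unique_mem.2 ⟨one_mem_zStar, fun g hg => hC (mem_zStar_iff.1 hg C)⟩
  · intro h
    obtain ⟨C, hC⟩ := exists_image_zSet_subset_zStar (G := G)
    exact ⟨C, h ▸ hC⟩
end

section
/- Let G be a Lie capable multiplicative Lie algebra such that G/(G⋆G) has finite exponent n. Then every element of 𝒵(G) = LZ(G) ∩ Z(G) has order dividing n; in particular 𝒵(G) has finite exponent. -/
open MulLie

/-
If `E/𝒵(E) ≅ G` and `x ∈ 𝒵(G)` lifts to `e ∈ E`, then `e ⋆ z` and `⁅e, z⁆` lie in `𝒵(E)` for every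
`z`. Central values make `z ↦ e ⋆ z` and `z ↦ ⁅e, z⁆` homomorphisms `E → E`, with
`eᵐ ⋆ z = (e ⋆ z)ᵐ` and `⁅eᵐ, z⁆ = ⁅e, z⁆ᵐ`. Both homomorphisms kill `𝒵(E)` and, by the Jacobi
identity and the conjugation axiom, every `a ⋆ b`. Since `zⁿ ∈ (E ⋆ E) · 𝒵(E)`, they kill `zⁿ`, so
`eⁿ ∈ 𝒵(E)`, i.e. `xⁿ = 1`.
-/

-- Both `⋆` and the group commutator `⁅·, ·⁆` satisfy the expansion laws assumed below.
section CentralPairing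

variable {E : Type*} [Group E] (op : E → E → E) {e : E}

lemma conj_eq_of_mem_center {c : E} (hc : c ∈ Subgroup.center E) (y : E) : y * c * y⁻¹ = c := by
  rw [Subgroup.mem_center_iff.mp hc y, mul_inv_cancel_right]

def centralPairingHom (hright : ∀ x y z : E, op x (y * z) = op x y * (y * op x z * y⁻¹))
    (hcen : ∀ z, op e z ∈ Subgroup.center E) : E →* E :=
  MonoidHom.mk' (op e) fun y z => by rw [hright, conj_eq_of_mem_center (hcen z)]

lemma pairing_pow_left_of_central (hleft : ∀ x y z : E, op (x * y) z = x * op y z * x⁻¹ * op x z)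
    (hcen : ∀ z, op e z ∈ Subgroup.center E) (z : E) : ∀ m : ℕ, op (e ^ m) z = op e z ^ m
  | 0 => by
    have h := hleft 1 1 z
    rw [one_mul, one_mul, inv_one, mul_one] at h
    rw [pow_zero, pow_zero, left_eq_mul.mp h]
  | m + 1 => by
    rw [pow_succ, hleft, conj_eq_of_mem_center (hcen z), pairing_pow_left_of_central hleft hcen z m,
      pow_succ']

end CentralPairing

open scoped commutatorElement

namespace MulLie

variable {E : Type*} [Group E] [MulLie E]

/-- The ideal `E ⋆ E`: by `conj_star` and `star_mul_right` the subgroup generated by the products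
`a ⋆ b` is already an ideal. -/
def starClosure (E : Type*) [Group E] [MulLie E] : Subgroup E :=
  Subgroup.closure {z : E | ∃ a b : E, z = star a b}

lemma star_one_right (x : E) : star x 1 = 1 := by
  have h := star_mul_right x 1 1
  rwa [one_mul, one_mul, inv_one, mul_one, left_eq_mul] at h

lemma star_swap (x y : E) : star x y = (star y x)⁻¹ := by
  have h := star_self (x * y)
  rw [star_mul_left, star_mul_right, star_mul_right, star_self, star_self] at h
  have h' : x * (star y x * star x y) * x⁻¹ = 1 := by rw [← h]; group
  exact eq_inv_of_mul_eq_one_right (conj_eq_one_iff.mp h')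

lemma star_one_left (x : E) : star 1 x = 1 := by
  rw [star_swap, star_one_right, inv_one]

lemma mem_center_of_mem_zSet {k : E} (hk : k ∈ zSet E) : k ∈ Subgroup.center E :=
  Subgroup.mem_center_iff.mpr fun y => (hk.2 y).symm

lemma star_eq_one_of_mem_zSet_right {k : E} (hk : k ∈ zSet E) (x : E) : star x k = 1 := by
  rw [star_swap, hk.1, inv_one]

lemma inv_mem_zSet {k : E} (hk : k ∈ zSet E) : k⁻¹ ∈ zSet E := by
  refine ⟨fun y => ?_, fun y => (show Commute k y from hk.2 y).inv_left.eq⟩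
  have h := star_mul_left k⁻¹ k y
  rwa [inv_mul_cancel, star_one_left, hk.1, mul_one, inv_inv, inv_mul_cancel, one_mul,
    eq_comm] at h

lemma star_zSet_mul_right {k : E} (hk : k ∈ zSet E) (x y : E) : star x (k * y) = star x y := by
  rw [star_mul_right, star_eq_one_of_mem_zSet_right hk, one_mul, hk.2, mul_inv_cancel_right]

lemma star_zSet_mul_left {k : E} (hk : k ∈ zSet E) (y z : E) : star (k * y) z = star y z := by
  rw [star_mul_left, hk.1, mul_one, hk.2, mul_inv_cancel_right]

variable {e : E}

lemma star_star_eq_one (hstar : ∀ z, star e z ∈ zSet E) (hcomm : ∀ z, ⁅e, z⁆ ∈ zSet E)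
    (a b : E) : star e (star a b) = 1 := by
  have hbe : b * e * b⁻¹ = ⁅e, b⁆⁻¹ * e := by
    rw [commutatorElement_inv, ← conj_eq_commutatorElement_mul, MulAut.conj_apply]
  have h := jacobi a b e
  rw [hbe, star_zSet_mul_right (inv_mem_zSet (hcomm b)), star_swap b e,
    (inv_mem_zSet (hstar b)).1, (hstar a).1, mul_one, mul_one] at h
  rw [star_swap, h, inv_one]

lemma commutatorElement_star_eq_one (hcomm : ∀ z, ⁅e, z⁆ ∈ zSet E) (a b : E) :
    ⁅e, star a b⁆ = 1 := by
  rw [commutatorElement_def, mul_inv_eq_one, conj_star, ← MulAut.conj_apply,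
    ← MulAut.conj_apply, conj_eq_commutatorElement_mul, conj_eq_commutatorElement_mul,
    star_zSet_mul_left (hcomm a), star_zSet_mul_right (hcomm b)]

theorem pow_mem_zSet {N : Subgroup E} (hN : ∀ k ∈ N, k ∈ zSet E)
    (hstar : ∀ z, star e z ∈ zSet E) (hcomm : ∀ z, ⁅e, z⁆ ∈ zSet E) {n : ℕ}
    (hpow : ∀ z : E, z ^ n ∈ starClosure E ⊔ N) : e ^ n ∈ zSet E := by
  have hkill : ∀ φ : E →* E, (∀ a b, φ (star a b) = 1) → (∀ k ∈ zSet E, φ k = 1) →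
      ∀ z, φ z ^ n = 1 := by
    intro φ hφstar hφz z
    have hle : starClosure E ≤ φ.ker := by
      rw [starClosure, Subgroup.closure_le]
      rintro _ ⟨a, b, rfl⟩
      exact hφstar a b
    rw [← map_pow, ← MonoidHom.mem_ker]
    exact sup_le hle (fun k hk => hφz k (hN k hk)) (hpow z)
  have hstar_cen z := mem_center_of_mem_zSet (hstar z)
  have hcomm_cen z := mem_center_of_mem_zSet (hcomm z)
  refine ⟨fun z => ?_, fun z => ?_⟩
  · rw [pairing_pow_left_of_central star star_mul_left hstar_cen]
    exact hkill (centralPairingHom star star_mul_right hstar_cen) (star_star_eq_one hstar hcomm)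
      (fun k hk => star_eq_one_of_mem_zSet_right hk e) z
  · rw [← commutatorElement_eq_one_iff_mul_comm,
      pairing_pow_left_of_central _ commutatorElement_mul_left_eq_conj_mul hcomm_cen]
    have hright (x y z : E) : ⁅x, y * z⁆ = ⁅x, y⁆ * (y * ⁅x, z⁆ * y⁻¹) := by
      rw [commutatorElement_mul_right_eq_mul_conj, mul_assoc, mul_assoc, mul_assoc]
    exact hkill (centralPairingHom _ hright hcomm_cen) (commutatorElement_star_eq_one hcomm)
      (fun k hk => commutatorElement_eq_one_iff_mul_comm.mpr (hk.2 e).symm) z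

end MulLie

open MulLie

namespace CentralExtOf

variable {G : Type*} [Group G] [MulLie G] (C : CentralExtOf G)

lemma map_starClosure : (starClosure C.E).map C.f = starClosure G := by
  rw [starClosure, MonoidHom.map_closure, starClosure]
  congr 1
  ext g
  constructor
  · rintro ⟨_, ⟨a, b, rfl⟩, rfl⟩
    exact ⟨C.f a, C.f b, C.map_star a b⟩
  · rintro ⟨a, b, rfl⟩
    obtain ⟨a', rfl⟩ := C.surj a
    obtain ⟨b', rfl⟩ := C.surj b
    exact ⟨star a' b', ⟨a', b', rfl⟩, C.map_star a' b'⟩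

lemma pow_mem_starClosure_sup_ker {n : ℕ} (hexp : ∀ g : G, g ^ n ∈ starClosure G) (z : C.E) :
    z ^ n ∈ starClosure C.E ⊔ C.f.ker := by
  have h := hexp (C.f z)
  rwa [← map_pow, ← C.map_starClosure, ← Subgroup.mem_comap, Subgroup.comap_map_eq] at h

lemma star_mem_zSet {e : C.E} (he : C.f e ∈ zSet G) (z : C.E) : star e z ∈ zSet C.E :=
  C.central _ (by rw [C.map_star, he.1])

lemma commutatorElement_mem_zSet {e : C.E} (he : C.f e ∈ zSet G) (z : C.E) :
    ⁅e, z⁆ ∈ zSet C.E :=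
  C.central _ (by rw [map_commutatorElement, commutatorElement_eq_one_iff_mul_comm, he.2])

end CentralExtOf

theorem zSet_exponent_of_lieCapable_general {G : Type u} [Group G] [MulLie G]
    (hcap : LieCapable G) (n : ℕ)
    (hexp : ∀ g : G, g ^ n ∈ Subgroup.closure {z : G | ∃ a b : G, z = star a b}) :
    ∀ x ∈ zSet G, x ^ n = 1 := by
  obtain ⟨C, hC⟩ := hcap
  intro x hx
  obtain ⟨e, rfl⟩ := C.surj x
  rw [← map_pow, hC]
  exact pow_mem_zSet (fun k hk => C.central k hk) (C.star_mem_zSet hx)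
    (C.commutatorElement_mem_zSet hx) (C.pow_mem_starClosure_sup_ker hexp)

/-- If `G` is Lie capable and `G/(G ⋆ G)` has finite exponent `n`, then every
element of `𝒵(G) = LZ(G) ∩ Z(G)` has order dividing `n`; in particular `𝒵(G)`
has finite exponent. -/
theorem zSet_exponent_of_lieCapable {G : Type u} [Group G] [MulLie G]
    (hcap : LieCapable G) (n : ℕ) (hn : 0 < n)
    (hexp : ∀ g : G, g ^ n ∈ Subgroup.closure {z : G | ∃ a b : G, z = star a b}) :
    ∀ x ∈ zSet G, x ^ n = 1 :=
  zSet_exponent_of_lieCapable_general hcap n hexp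
end
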